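/- arXiv:0806.2669 — 5 statements merged into one kernel-verified Lean document; each statement's English description precedes it below -/
import Mathlib

section
/- The orthogonal Procrustes rotation is given by the SVD: if Z = X'HY has singular value decomposition Z = ULV' with U a q×d column-orthogonal matrix, L diagonal nonnegative, V a d×d orthogonal matrix, then A = UV' maximizes tr(A'Z) over all q×d matrices A with A'A = I, and hence minimizes ‖H(X - YA')‖_F² over such A. -/
/-!
Expanding the square and using that `H` is a symmetric idempotent, the objective
`‖H(X - YAᵀ)‖²` equals a constant minus `2 tr(AᵀZ)` for every column-orthogonal `A`, so both
claims reduce to `tr(AᵀZ) ≤ tr L`. Writing `tr(AᵀZ) = tr((AV)ᵀ U L) = ∑ₚ ((AV)ᵀU)ₚₚ Lₚₚ`,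
each diagonal entry `((AV)ᵀU)ₚₚ` is the inner product of two unit columns, hence at most `1`,
while the weights `Lₚₚ` are nonnegative; `A = UVᵀ` attains `tr L`.
-/

open Matrix

namespace Matrix

variable {k m n : Type*}

theorem isSymm_one_sub_smul_ones [DecidableEq k] (c : ℝ) :
    (1 - c • of fun _ _ : k => (1 : ℝ)).IsSymm :=
  isSymm_one.sub ((IsSymm.ext fun _ _ => rfl).smul c)

theorem isIdempotentElem_one_sub_inv_card_smul_ones (r : ℕ) :
    IsIdempotentElem (1 - (r : ℝ)⁻¹ • of fun _ _ : Fin r => (1 : ℝ)) := by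
  set J : Matrix (Fin r) (Fin r) ℝ := of fun _ _ => 1
  have hJJ : J * J = (r : ℝ) • J := by
    ext i j
    simp [J, mul_apply]
  refine IsIdempotentElem.one_sub ?_
  -- `r⁻¹ * r⁻¹ * r = r⁻¹` holds also for `r = 0`, where both sides vanish.
  have hr : (r : ℝ)⁻¹ * (r : ℝ)⁻¹ * r = (r : ℝ)⁻¹ := by
    rcases eq_or_ne (r : ℝ) 0 with h | h
    · simp [h]
    · field_simp
  rw [IsIdempotentElem, Matrix.smul_mul, Matrix.mul_smul, hJJ, smul_smul, smul_smul, hr]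

theorem trace_transpose_mul_self_mul_sub_mul_transpose [Fintype k] [Fintype m] [Fintype n]
    [DecidableEq n] {R : Type*} [CommRing R]
    {H : Matrix k k R} (hHs : H.IsSymm) (hHi : IsIdempotentElem H)
    (X : Matrix k m R) (Y : Matrix k n R) {B : Matrix m n R} (hB : Bᵀ * B = 1) :
    ((H * (X - Y * Bᵀ))ᵀ * (H * (X - Y * Bᵀ))).trace =
      (Xᵀ * H * X).trace + (Yᵀ * H * Y).trace - 2 * (Bᵀ * (Xᵀ * H * Y)).trace := by
  have hsq : (H * (X - Y * Bᵀ))ᵀ * (H * (X - Y * Bᵀ)) = (X - Y * Bᵀ)ᵀ * H * (X - Y * Bᵀ) := by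
    rw [transpose_mul, hHs.eq, Matrix.mul_assoc, ← Matrix.mul_assoc H, hHi.eq,
      ← Matrix.mul_assoc]
  have hcross₁ : (Xᵀ * H * (Y * Bᵀ)).trace = (Bᵀ * (Xᵀ * H * Y)).trace := by
    rw [← Matrix.mul_assoc, trace_mul_comm]
  have hcross₂ : (B * Yᵀ * H * X).trace = (Bᵀ * (Xᵀ * H * Y)).trace := by
    rw [← trace_transpose, ← hcross₁]
    simp only [transpose_mul, transpose_transpose, hHs.eq, Matrix.mul_assoc]
  have hquad : (B * Yᵀ * H * (Y * Bᵀ)).trace = (Yᵀ * H * Y).trace := by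
    rw [show B * Yᵀ * H * (Y * Bᵀ) = B * (Yᵀ * H * Y * Bᵀ) by simp only [Matrix.mul_assoc],
      trace_mul_comm, Matrix.mul_assoc _ Bᵀ, hB, Matrix.mul_one]
  rw [hsq, transpose_sub, transpose_mul, transpose_transpose]
  simp only [Matrix.sub_mul, Matrix.mul_sub, trace_sub]
  rw [hcross₁, hcross₂, hquad]
  ring

theorem two_mul_transpose_mul_apply_self_le [Fintype m] (A U : Matrix m n ℝ) (p : n) :
    2 * (Aᵀ * U) p p ≤ (Aᵀ * A) p p + (Uᵀ * U) p p := by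
  simp only [mul_apply, transpose_apply, Finset.mul_sum, ← Finset.sum_add_distrib]
  exact Finset.sum_le_sum fun j _ => by nlinarith [sq_nonneg (A j p - U j p)]

theorem trace_mul_le_trace_of_isDiag [Fintype n] {M L : Matrix n n ℝ} (hL : L.IsDiag)
    (hL₀ : ∀ p, 0 ≤ L p p) (hM : ∀ p, M p p ≤ 1) : (M * L).trace ≤ L.trace := by
  classical
  rw [← hL.diagonal_diag]
  simp only [trace, diag_apply, mul_diagonal, diagonal_apply_eq]
  exact Finset.sum_le_sum fun p _ => mul_le_of_le_one_left (hL₀ p) (hM p)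

variable [Fintype m] [Fintype n] [DecidableEq n]

theorem trace_transpose_mul_svd_le {A U : Matrix m n ℝ} {L V : Matrix n n ℝ}
    (hA : Aᵀ * A = 1) (hU : Uᵀ * U = 1) (hV : Vᵀ * V = 1) (hL : L.IsDiag)
    (hL₀ : ∀ p, 0 ≤ L p p) : (Aᵀ * (U * L * Vᵀ)).trace ≤ L.trace := by
  have hAV : (A * V)ᵀ * (A * V) = 1 := by
    rw [transpose_mul, Matrix.mul_assoc, ← Matrix.mul_assoc Aᵀ, hA, Matrix.one_mul, hV]
  have htrace : (Aᵀ * (U * L * Vᵀ)).trace = ((A * V)ᵀ * U * L).trace := by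
    rw [← Matrix.mul_assoc, trace_mul_comm, transpose_mul]
    simp only [Matrix.mul_assoc]
  rw [htrace]
  refine trace_mul_le_trace_of_isDiag hL hL₀ fun p => ?_
  have := two_mul_transpose_mul_apply_self_le (A * V) U p
  rw [hAV, hU, one_apply_eq] at this
  linarith

theorem trace_transpose_mul_svd_self {U : Matrix m n ℝ} {L V : Matrix n n ℝ}
    (hU : Uᵀ * U = 1) (hV : Vᵀ * V = 1) : ((U * Vᵀ)ᵀ * (U * L * Vᵀ)).trace = L.trace := by
  rw [transpose_mul, transpose_transpose,
    show V * Uᵀ * (U * L * Vᵀ) = V * (Uᵀ * U) * L * Vᵀ by simp only [Matrix.mul_assoc],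
    hU, Matrix.mul_one, trace_mul_comm, ← Matrix.mul_assoc, hV, Matrix.one_mul]

theorem transpose_mul_self_mul_transpose_eq_one {U : Matrix m n ℝ} {V : Matrix n n ℝ}
    (hU : Uᵀ * U = 1) (hV : Vᵀ * V = 1) : (U * Vᵀ)ᵀ * (U * Vᵀ) = 1 := by
  rw [transpose_mul, transpose_transpose, Matrix.mul_assoc V, ← Matrix.mul_assoc Uᵀ, hU,
    Matrix.one_mul, mul_eq_one_comm.1 hV]

end Matrix

theorem procrustes_rotation_svd_general {k q d : ℕ}
    (X : Matrix (Fin k) (Fin q) ℝ) (Y : Matrix (Fin k) (Fin d) ℝ)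
    (H : Matrix (Fin k) (Fin k) ℝ)
    (hH : H = 1 - (k : ℝ)⁻¹ • Matrix.of (fun _ _ : Fin k => (1 : ℝ)))
    (Z : Matrix (Fin q) (Fin d) ℝ) (hZ : Z = Xᵀ * H * Y)
    (U : Matrix (Fin q) (Fin d) ℝ) (L V : Matrix (Fin d) (Fin d) ℝ)
    (hU : Uᵀ * U = 1) (hV : Vᵀ * V = 1)
    (hLdiag : ∀ p r : Fin d, p ≠ r → L p r = 0) (hLpos : ∀ p, 0 ≤ L p p)
    (hSVD : Z = U * L * Vᵀ) :
    ∀ A : Matrix (Fin q) (Fin d) ℝ, Aᵀ * A = 1 →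
      (Aᵀ * Z).trace ≤ ((U * Vᵀ)ᵀ * Z).trace ∧
      ((H * (X - Y * (U * Vᵀ)ᵀ))ᵀ * (H * (X - Y * (U * Vᵀ)ᵀ))).trace ≤
        ((H * (X - Y * Aᵀ))ᵀ * (H * (X - Y * Aᵀ))).trace := by
  intro A hA
  have hmax : (Aᵀ * Z).trace ≤ ((U * Vᵀ)ᵀ * Z).trace := by
    rw [hSVD, trace_transpose_mul_svd_self hU hV]
    exact trace_transpose_mul_svd_le hA hU hV hLdiag hLpos
  have hHs : H.IsSymm := hH ▸ isSymm_one_sub_smul_ones _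
  have hHi : IsIdempotentElem H := hH ▸ isIdempotentElem_one_sub_inv_card_smul_ones k
  refine ⟨hmax, ?_⟩
  rw [trace_transpose_mul_self_mul_sub_mul_transpose hHs hHi X Y hA,
    trace_transpose_mul_self_mul_sub_mul_transpose hHs hHi X Y
      (transpose_mul_self_mul_transpose_eq_one hU hV), ← hZ]
  linarith

/-- If `Z = X'HY = ULV'` (SVD), then `A = UV'` maximizes `tr(A'Z)`
over column-orthogonal `A` and hence minimizes `‖H(X - YA')‖_F²`. -/
theorem procrustes_rotation_svd {k q d : ℕ} (hk : 0 < k) (hdq : d ≤ q)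
    (X : Matrix (Fin k) (Fin q) ℝ) (Y : Matrix (Fin k) (Fin d) ℝ)
    (H : Matrix (Fin k) (Fin k) ℝ)
    (hH : H = 1 - (k : ℝ)⁻¹ • Matrix.of (fun _ _ : Fin k => (1 : ℝ)))
    (Z : Matrix (Fin q) (Fin d) ℝ) (hZ : Z = Xᵀ * H * Y)
    (U : Matrix (Fin q) (Fin d) ℝ) (L V : Matrix (Fin d) (Fin d) ℝ)
    (hU : Uᵀ * U = 1) (hV : Vᵀ * V = 1) (hV' : V * Vᵀ = 1)
    (hLdiag : ∀ p r : Fin d, p ≠ r → L p r = 0) (hLpos : ∀ p, 0 ≤ L p p)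
    (hSVD : Z = U * L * Vᵀ) :
    ∀ A : Matrix (Fin q) (Fin d) ℝ, Aᵀ * A = 1 →
      (Aᵀ * Z).trace ≤ ((U * Vᵀ)ᵀ * Z).trace ∧
      ((H * (X - Y * (U * Vᵀ)ᵀ))ᵀ * (H * (X - Y * (U * Vᵀ)ᵀ))).trace ≤
        ((H * (X - Y * Aᵀ))ᵀ * (H * (X - Y * Aᵀ))).trace :=
  procrustes_rotation_svd_general X Y H hH Z hZ U L V hU hV hLdiag hLpos hSVD
end

section
/- The best rank-d approximation in Frobenius norm to a centered matrix is its projection onto the top d principal components: if X is a k×q centered matrix of rank q and d ≤ q, then inf over rank-d matrices X̃ of ‖X - X̃‖_F² is attained when X̃ is the projection of X on the subspace spanned by the first d principal components of X (eigenvectors of X'X corresponding to its d largest eigenvalues). -/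
/-!
Realize a competitor `Xt` of rank at most `d` through the orthogonal projection `π` onto its row
space: `Xt π = Xt` and `tr π = rank Xt ≤ d`. By Pythagoras `X π` is at least as close to `X` as
`Xt` is, and `‖X - X π‖² = tr (X'X) - tr (X'X π)`. Writing `X'X = Q diag(μ) Q'`, the trace
`tr (X'X π) = ∑ μⱼ Mⱼⱼ` with `M = Q' π Q` again an orthogonal projection, so `0 ≤ Mⱼⱼ ≤ 1` and
`∑ Mⱼⱼ ≤ d`; such a weighted sum of the decreasing `μⱼ ≥ 0` is at most `μ₁ + ⋯ + μ_d`
(Ky Fan), which is exactly `tr (X'X PP')`.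
-/

open Matrix

theorem Fin.sum_castLE_eq_sum_ite {M : Type*} [AddCommMonoid M] {d q : ℕ} (hd : d ≤ q)
    (f : Fin q → M) :
    ∑ j : Fin d, f (Fin.castLE hd j) = ∑ j : Fin q, if (j : ℕ) < d then f j else 0 := by
  have hfilter : Finset.univ.filter (fun j : Fin q => (j : ℕ) < d) =
      Finset.univ.map (Fin.castLEEmb hd) := by
    ext j
    simpa using ⟨fun h => ⟨⟨j, h⟩, rfl⟩, by rintro ⟨a, rfl⟩; exact a.isLt⟩
  rw [← Finset.sum_filter, hfilter, Finset.sum_map]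
  rfl

theorem sum_mul_le_sum_castLE {R : Type*} [CommRing R] [LinearOrder R] [IsStrictOrderedRing R]
    {q d : ℕ} (hd : d ≤ q) {μ t : Fin q → R} (hμ : Antitone μ)
    (hμ0 : 0 ≤ μ) (ht0 : 0 ≤ t) (ht1 : t ≤ 1) (ht : ∑ j, t j ≤ d) :
    ∑ j, μ j * t j ≤ ∑ j : Fin d, μ (Fin.castLE hd j) := by
  obtain ⟨c, hc0, hc_head, hc_tail⟩ : ∃ c, 0 ≤ c ∧ (∀ j : Fin q, (j : ℕ) < d → c ≤ μ j) ∧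
      (∀ j : Fin q, d ≤ (j : ℕ) → μ j ≤ c) := by
    rcases lt_or_ge d q with hdq | hdq
    · exact ⟨μ ⟨d, hdq⟩, hμ0 _, fun j hj => hμ (Fin.le_def.mpr hj.le),
        fun j hj => hμ (Fin.le_def.mpr hj)⟩
    · exact ⟨0, le_rfl, fun j _ => hμ0 j, fun j hj => absurd j.isLt (by omega)⟩
  set s : Fin q → R := fun j => if (j : ℕ) < d then 1 else 0
  -- `(μ j - c) * (t j - s j) ≤ 0`, since `c` separates the first `d` values of `μ` from the rest
  have hpoint : ∀ j, μ j * t j ≤ μ j * s j + c * (t j - s j) := by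
    intro j
    have ht0j : 0 ≤ t j := ht0 j
    have ht1j : t j ≤ 1 := ht1 j
    by_cases hj : (j : ℕ) < d
    · simp only [s, if_pos hj]
      nlinarith [mul_nonneg (sub_nonneg.mpr (hc_head j hj)) (sub_nonneg.mpr ht1j)]
    · simp only [s, if_neg hj]
      nlinarith [mul_nonneg (sub_nonneg.mpr (hc_tail j (not_lt.mp hj))) ht0j]
  have hs : ∑ j, s j = d := by simp [s, ← Fin.sum_castLE_eq_sum_ite hd]
  have hμs : ∑ j, μ j * s j = ∑ j : Fin d, μ (Fin.castLE hd j) := by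
    simp [s, Fin.sum_castLE_eq_sum_ite hd]
  calc ∑ j, μ j * t j ≤ ∑ j, (μ j * s j + c * (t j - s j)) :=
        Finset.sum_le_sum fun j _ => hpoint j
    _ = ∑ j, μ j * s j + c * (∑ j, t j - d) := by
      rw [Finset.sum_add_distrib, ← Finset.mul_sum, Finset.sum_sub_distrib, hs]
    _ ≤ ∑ j : Fin d, μ (Fin.castLE hd j) := by
      rw [hμs]
      nlinarith

theorem IsStarProjection.star_mul_mul {R : Type*} [Semiring R] [StarRing R] {p u : R}
    (hp : IsStarProjection p) (hu : u * star u = 1) : IsStarProjection (star u * p * u) where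
  isIdempotentElem := by
    rw [IsIdempotentElem, mul_assoc, ← mul_assoc u, ← mul_assoc u, hu, one_mul, mul_assoc,
      ← mul_assoc p, hp.isIdempotentElem.eq, ← mul_assoc]
  isSelfAdjoint := hp.isSelfAdjoint.conjugate' u

namespace Matrix

variable {m n : Type*} [Fintype m] [Fintype n]

theorem transpose_eq_self_of_isStarProjection {π : Matrix n n ℝ} (hπ : IsStarProjection π) :
    πᵀ = π :=
  (isHermitian_iff_isSymm.mp hπ.isSelfAdjoint.isHermitian).eq

theorem diag_mem_Icc_of_isStarProjection {π : Matrix n n ℝ} (hπ : IsStarProjection π) (j : n) :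
    π j j ∈ Set.Icc 0 1 := by
  have hsq : π j j = ∑ a, π j a ^ 2 := by
    conv_lhs => rw [← hπ.isIdempotentElem.eq]
    rw [mul_apply]
    refine Finset.sum_congr rfl fun a _ => ?_
    rw [sq, ← transpose_apply π a j, transpose_eq_self_of_isStarProjection hπ]
  have h0 : 0 ≤ π j j := hsq ▸ Finset.sum_nonneg fun a _ => sq_nonneg (π j a)
  have hle : π j j ^ 2 ≤ π j j := by
    conv_rhs => rw [hsq]
    exact Finset.single_le_sum (fun a _ => sq_nonneg (π j a)) (Finset.mem_univ j)
  exact ⟨h0, by nlinarith⟩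

theorem trace_transpose_mul_self_nonneg (A : Matrix m n ℝ) : 0 ≤ (Aᵀ * A).trace := by
  simpa using (posSemidef_conjTranspose_mul_self A).trace_nonneg

theorem trace_transpose_mul_self_sub_mul_le (X : Matrix m n ℝ) {π : Matrix n n ℝ}
    (hπ : IsStarProjection π) {Y : Matrix m n ℝ} (hY : Y * π = Y) :
    ((X - X * π)ᵀ * (X - X * π)).trace ≤ ((X - Y)ᵀ * (X - Y)).trace := by
  have hC : (X - X * π) * π = 0 := by
    rw [Matrix.sub_mul, Matrix.mul_assoc, hπ.isIdempotentElem.eq, sub_self]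
  have hD : (X * π - Y) * π = X * π - Y := by
    rw [Matrix.sub_mul, Matrix.mul_assoc, hπ.isIdempotentElem.eq, hY]
  set C := X - X * π
  set D := X * π - Y
  have hcross : (Cᵀ * D).trace = 0 := by
    rw [← hD, ← Matrix.mul_assoc, trace_mul_comm, ← Matrix.mul_assoc,
      ← transpose_eq_self_of_isStarProjection hπ, ← transpose_mul, hC, transpose_zero,
      Matrix.zero_mul, trace_zero]
  have hsplit : ((X - Y)ᵀ * (X - Y)).trace = (Cᵀ * C).trace + (Dᵀ * D).trace := by
    have hXY : X - Y = C + D := by simp only [C, D]; abel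
    rw [hXY, transpose_add, Matrix.add_mul, Matrix.mul_add, Matrix.mul_add, trace_add, trace_add,
      trace_add, ← trace_transpose (Dᵀ * C), transpose_mul, transpose_transpose, hcross]
    ring
  rw [hsplit]
  linarith [trace_transpose_mul_self_nonneg D]

theorem transpose_submatrix_mul_mul_submatrix {α d : Type*} [Semiring α] [Fintype d]
    (Q A : Matrix n n α) (f : d → n) :
    (Q.submatrix id f)ᵀ * A * Q.submatrix id f = (Qᵀ * A * Q).submatrix f f := by
  ext i j
  simp [mul_apply, Finset.sum_mul]

theorem isStarProjection_mul_transpose {d : Type*} [Fintype d] [DecidableEq d]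
    {P : Matrix n d ℝ} (hP : Pᵀ * P = 1) : IsStarProjection (P * Pᵀ) where
  isIdempotentElem := by
    rw [IsIdempotentElem, Matrix.mul_assoc, ← Matrix.mul_assoc Pᵀ, hP, Matrix.one_mul]
  isSelfAdjoint := by
    simp [IsSelfAdjoint, star_eq_conjTranspose]

variable [DecidableEq n]

theorem trace_eq_rank_of_isIdempotentElem {K : Type*} [Field K] {A : Matrix n n K}
    (hA : IsIdempotentElem A) : A.trace = A.rank := by
  have hlin : IsIdempotentElem (toLin' A) := hA.map toLinAlgEquiv'
  rw [rank, ← toLin'_apply', ← (LinearMap.IsIdempotentElem.isProj_range _ hlin).trace,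
    LinearMap.trace_eq_matrix_trace K (Pi.basisFun K n), LinearMap.toMatrix_eq_toMatrix',
    LinearMap.toMatrix'_toLin']

theorem exists_isStarProjection_mul_eq_self_rank_eq (B : Matrix m n ℝ) :
    ∃ π : Matrix n n ℝ, IsStarProjection π ∧ B * π = B ∧ π.rank = B.rank := by
  classical
  set W := LinearMap.range (toEuclideanLin Bᵀ)
  set π := (toEuclideanCLM (𝕜 := ℝ) (n := n)).symm W.starProjection
  have hπCLM : toEuclideanCLM (𝕜 := ℝ) π = W.starProjection := toEuclideanCLM.apply_symm_apply _
  have hπ : toEuclideanLin π = W.starProjection := congrArg ContinuousLinearMap.toLinearMap hπCLM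
  have hproj : IsStarProjection π := by
    constructor <;> apply EquivLike.injective (toEuclideanCLM (𝕜 := ℝ) (n := n))
    · rw [map_mul, hπCLM]
      exact W.isIdempotentElem_starProjection
    · rw [map_star, hπCLM]
      exact isSelfAdjoint_starProjection W
  refine ⟨π, hproj, ?_, ?_⟩
  · have hfix : π * Bᵀ = Bᵀ := by
      refine toLin'.injective (LinearMap.ext fun v => ?_)
      have := (LinearMap.congr_fun hπ _).trans (W.starProjection_eq_self_iff.mpr
        (LinearMap.mem_range_self (toEuclideanLin Bᵀ) (WithLp.toLp 2 v)))
      simpa [toLin'_mul] using congrArg WithLp.ofLp this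
    simpa [transpose_eq_self_of_isStarProjection hproj] using congrArg transpose hfix
  · rw [← rank_transpose B,
      rank_eq_finrank_range_toLin π (PiLp.basisFun 2 ℝ n) (PiLp.basisFun 2 ℝ n),
      rank_eq_finrank_range_toLin Bᵀ (PiLp.basisFun 2 ℝ n) (PiLp.basisFun 2 ℝ m),
      ← toLpLin_eq_toLin, ← toLpLin_eq_toLin]
    change Module.finrank ℝ (toEuclideanLin π).range = Module.finrank ℝ W
    rw [hπ]
    exact congrArg (fun U : Submodule ℝ _ => Module.finrank ℝ U) W.range_starProjection

theorem trace_transpose_mul_self_sub_mul (X : Matrix m n ℝ) {π : Matrix n n ℝ}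
    (hπ : IsStarProjection π) :
    ((X - X * π)ᵀ * (X - X * π)).trace = (Xᵀ * X).trace - (Xᵀ * X * π).trace := by
  have hρ := hπ.one_sub
  have hX : X - X * π = X * (1 - π) := by rw [Matrix.mul_sub, Matrix.mul_one]
  calc ((X - X * π)ᵀ * (X - X * π)).trace = ((1 - π)ᵀ * (Xᵀ * X * (1 - π))).trace := by
        rw [hX, transpose_mul]
        simp only [Matrix.mul_assoc]
    _ = (Xᵀ * X * ((1 - π) * (1 - π))).trace := by
        rw [transpose_eq_self_of_isStarProjection hρ, trace_mul_comm, Matrix.mul_assoc]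
    _ = (Xᵀ * X).trace - (Xᵀ * X * π).trace := by
        rw [hρ.isIdempotentElem.eq, Matrix.mul_sub, Matrix.mul_one, trace_sub]

theorem nonneg_of_transpose_mul_self_eq {X : Matrix m n ℝ} {Q : Matrix n n ℝ} {μ : n → ℝ}
    (hQ : Qᵀ * Q = 1) (hX : Xᵀ * X = Q * diagonal μ * Qᵀ) : 0 ≤ μ := by
  have hμ : diagonal μ = (X * Q)ᵀ * (X * Q) := by
    rw [transpose_mul, Matrix.mul_assoc, ← Matrix.mul_assoc Xᵀ, hX]
    simp only [Matrix.mul_assoc, hQ, Matrix.mul_one]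
    rw [← Matrix.mul_assoc, hQ, Matrix.one_mul]
  have hpsd : (diagonal μ).PosSemidef := by
    simpa [hμ] using posSemidef_conjTranspose_mul_self (X * Q)
  exact posSemidef_diagonal_iff.mp hpsd

theorem trace_mul_le_sum_castLE {q d : ℕ} (hd : d ≤ q) {Q : Matrix (Fin q) (Fin q) ℝ}
    (hQ : Qᵀ * Q = 1) {μ : Fin q → ℝ} (hμ : Antitone μ) (hμ0 : 0 ≤ μ)
    {π : Matrix (Fin q) (Fin q) ℝ} (hπ : IsStarProjection π) (htr : π.trace ≤ d) :
    (Q * diagonal μ * Qᵀ * π).trace ≤ ∑ j : Fin d, μ (Fin.castLE hd j) := by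
  have hQ' : Q * Qᵀ = 1 := mul_eq_one_comm.mp hQ
  have hM : IsStarProjection (Qᵀ * π * Q) := by
    simpa [star_eq_conjTranspose] using
      hπ.star_mul_mul (u := Q) (by simpa [star_eq_conjTranspose] using hQ')
  have htrace : (Q * diagonal μ * Qᵀ * π).trace = ∑ j, μ j * (Qᵀ * π * Q) j j := by
    rw [Matrix.mul_assoc Q, Matrix.mul_assoc Q, trace_mul_comm, Matrix.mul_assoc,
      Matrix.mul_assoc, ← Matrix.mul_assoc Qᵀ]
    simp only [trace, diag, diagonal_mul]
  have hMtr : (Qᵀ * π * Q).trace = π.trace := by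
    rw [trace_mul_comm, ← Matrix.mul_assoc, hQ', Matrix.one_mul]
  rw [htrace]
  exact sum_mul_le_sum_castLE hd hμ hμ0 (fun j => (diag_mem_Icc_of_isStarProjection hM j).1)
    (fun j => (diag_mem_Icc_of_isStarProjection hM j).2) (hMtr.trans_le htr)

theorem transpose_submatrix_mul_submatrix_eq_one {d : Type*} [Fintype d] [DecidableEq d]
    {Q : Matrix n n ℝ} (hQ : Qᵀ * Q = 1) {f : d → n} (hf : Function.Injective f) :
    (Q.submatrix id f)ᵀ * Q.submatrix id f = 1 := by
  rw [← Matrix.mul_one (Q.submatrix id f)ᵀ, transpose_submatrix_mul_mul_submatrix, Matrix.mul_one,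
    hQ, submatrix_one _ hf]

theorem trace_mul_submatrix_mul_transpose_submatrix {d : Type*} [Fintype d] [DecidableEq d]
    {Q : Matrix n n ℝ} (hQ : Qᵀ * Q = 1) {f : d → n} (hf : Function.Injective f) (μ : n → ℝ) :
    (Q * diagonal μ * Qᵀ * (Q.submatrix id f * (Q.submatrix id f)ᵀ)).trace = ∑ j, μ (f j) := by
  rw [← Matrix.mul_assoc, trace_mul_comm, ← Matrix.mul_assoc,
    transpose_submatrix_mul_mul_submatrix]
  simp only [Matrix.mul_assoc, hQ, Matrix.mul_one]
  rw [← Matrix.mul_assoc, hQ, Matrix.one_mul, submatrix_diagonal _ _ hf, trace_diagonal]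
  rfl

end Matrix

theorem pca_best_rank_d_general {k q d : ℕ} (hd : d ≤ q)
    (X : Matrix (Fin k) (Fin q) ℝ)
    (Q : Matrix (Fin q) (Fin q) ℝ) (μ : Fin q → ℝ)
    (hQ : Qᵀ * Q = 1)
    (hdiag : Xᵀ * X = Q * Matrix.diagonal μ * Qᵀ)
    (hmono : ∀ i j : Fin q, i ≤ j → μ j ≤ μ i)
    (P : Matrix (Fin q) (Fin d) ℝ)
    (hP : P = Q.submatrix id (Fin.castLE hd)) :
    ∀ Xt : Matrix (Fin k) (Fin q) ℝ, Xt.rank ≤ d →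
      ((X - X * P * Pᵀ)ᵀ * (X - X * P * Pᵀ)).trace ≤
        ((X - Xt)ᵀ * (X - Xt)).trace := by
  intro Xt hXt
  obtain ⟨π, hπ, hXtπ, hπrank⟩ := Xt.exists_isStarProjection_mul_eq_self_rank_eq
  have hπtr : π.trace ≤ d := by
    rw [trace_eq_rank_of_isIdempotentElem hπ.isIdempotentElem, hπrank]
    exact_mod_cast hXt
  have hPP : Pᵀ * P = 1 :=
    hP ▸ transpose_submatrix_mul_submatrix_eq_one hQ (Fin.castLE_injective hd)
  have htop : (Xᵀ * X * (P * Pᵀ)).trace = ∑ j : Fin d, μ (Fin.castLE hd j) := by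
    rw [hdiag, hP]
    exact trace_mul_submatrix_mul_transpose_submatrix hQ (Fin.castLE_injective hd) μ
  have hkyfan : (Xᵀ * X * π).trace ≤ ∑ j : Fin d, μ (Fin.castLE hd j) := by
    rw [hdiag]
    exact trace_mul_le_sum_castLE hd hQ hmono (nonneg_of_transpose_mul_self_eq hQ hdiag) hπ hπtr
  calc ((X - X * P * Pᵀ)ᵀ * (X - X * P * Pᵀ)).trace
      = (Xᵀ * X).trace - ∑ j : Fin d, μ (Fin.castLE hd j) := by
        rw [Matrix.mul_assoc,
          trace_transpose_mul_self_sub_mul X (isStarProjection_mul_transpose hPP), htop]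
    _ ≤ (Xᵀ * X).trace - (Xᵀ * X * π).trace := sub_le_sub_left hkyfan _
    _ = ((X - X * π)ᵀ * (X - X * π)).trace := (trace_transpose_mul_self_sub_mul X hπ).symm
    _ ≤ ((X - Xt)ᵀ * (X - Xt)).trace := trace_transpose_mul_self_sub_mul_le X hπ hXtπ

/-- The best rank-`d` approximation in Frobenius norm to a centered
matrix `X` of rank `q` is its projection `XPP'` onto the span of the first `d`
principal components (top-`d` eigenvectors of `X'X`). -/
theorem pca_best_rank_d {k q d : ℕ} (hd : d ≤ q)
    (X : Matrix (Fin k) (Fin q) ℝ)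
    (hcent : ∀ j, ∑ i, X i j = 0) (hrank : X.rank = q)
    (Q : Matrix (Fin q) (Fin q) ℝ) (μ : Fin q → ℝ)
    (hQ : Qᵀ * Q = 1) (hQ' : Q * Qᵀ = 1)
    (hdiag : Xᵀ * X = Q * Matrix.diagonal μ * Qᵀ)
    (hmono : ∀ i j : Fin q, i ≤ j → μ j ≤ μ i)
    (P : Matrix (Fin q) (Fin d) ℝ)
    (hP : P = Q.submatrix id (Fin.castLE hd)) :
    ∀ Xt : Matrix (Fin k) (Fin q) ℝ, Xt.rank ≤ d →
      ((X - X * P * Pᵀ)ᵀ * (X - X * P * Pᵀ)).trace ≤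
        ((X - Xt)ᵀ * (X - Xt)).trace :=
  pca_best_rank_d_general hd X Q μ hQ hdiag hmono P hP
end

section
/- Second-order convergence of the local Procrustes error under an isometric C² embedding: if φ is a C² map with J = Dφ(z₀) satisfying J'J = I, then for points z₀, z₁, …, z_k in a ball of radius r around z₀ and x_j = φ(z_j), the quantity inf over column-orthogonal A and b of ∑_j ‖x_j - A z_j - b‖² is O(r⁴) as r → 0; specifically it is bounded by C·k·r⁴ where C depends only on the bound of the second derivative of φ. -/
/-! Take `A` to be the matrix of the isometry `Dφ(z₀)` and `b = φ(z₀) - Dφ(z₀) z₀`. Each residual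
is then the Taylor remainder `φ(z_j) - φ(z₀) - Dφ(z₀)(z_j - z₀)`, which the mean value inequality
applied to `φ - Dφ(z₀)` on `D ∩ B̄(z₀, ‖z_j - z₀‖)` bounds by `M r²`; summing the squares gives
`M² k r⁴`. -/

open Matrix

section Taylor

variable {E F : Type*} [NormedAddCommGroup E] [NormedSpace ℝ E] [NormedAddCommGroup F]
  [NormedSpace ℝ F] {f : E → F} {s : Set E} {M : ℝ} {x₀ x : E}

theorem Convex.norm_fderiv_sub_le_of_norm_iteratedFDeriv_two_le (hs : Convex ℝ s)
    (hf : ContDiff ℝ 2 f) (hM : ∀ y ∈ s, ‖iteratedFDeriv ℝ 2 f y‖ ≤ M) (hx₀ : x₀ ∈ s)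
    (hx : x ∈ s) : ‖fderiv ℝ f x - fderiv ℝ f x₀‖ ≤ M * ‖x - x₀‖ :=
  hs.norm_image_sub_le_of_norm_fderiv_le
    (fun y _ => (hf.fderiv_right (m := 1) le_rfl).differentiable one_ne_zero y)
    (fun y hy => by rw [← norm_iteratedFDeriv_one, norm_iteratedFDeriv_fderiv]; exact hM y hy)
    hx₀ hx

theorem Convex.norm_sub_sub_fderiv_le_of_norm_iteratedFDeriv_two_le (hs : Convex ℝ s)
    (hf : ContDiff ℝ 2 f) (hM : ∀ y ∈ s, ‖iteratedFDeriv ℝ 2 f y‖ ≤ M) (hx₀ : x₀ ∈ s)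
    (hx : x ∈ s) : ‖f x - f x₀ - fderiv ℝ f x₀ (x - x₀)‖ ≤ M * ‖x - x₀‖ ^ 2 := by
  have hM₀ : 0 ≤ M := (norm_nonneg _).trans (hM x₀ hx₀)
  have hs' : Convex ℝ (s ∩ Metric.closedBall x₀ ‖x - x₀‖) := hs.inter (convex_closedBall _ _)
  calc ‖f x - f x₀ - fderiv ℝ f x₀ (x - x₀)‖ ≤ (M * ‖x - x₀‖) * ‖x - x₀‖ :=
        hs'.norm_image_sub_le_of_norm_fderiv_le' (fun y _ => hf.differentiable two_ne_zero y)
          (fun y hy => (hs.norm_fderiv_sub_le_of_norm_iteratedFDeriv_two_le hf hM hx₀ hy.1).trans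
            (mul_le_mul_of_nonneg_left (mem_closedBall_iff_norm.1 hy.2) hM₀))
          ⟨hx₀, Metric.mem_closedBall_self (norm_nonneg _)⟩ ⟨hx, mem_closedBall_iff_norm.2 le_rfl⟩
    _ = M * ‖x - x₀‖ ^ 2 := by ring

end Taylor

theorem LinearIsometry.transpose_mul_self_toEuclideanLin_symm {m n : Type*} [Fintype m]
    [Fintype n] [DecidableEq m] [DecidableEq n]
    (f : EuclideanSpace ℝ n →ₗᵢ[ℝ] EuclideanSpace ℝ m) :
    (toEuclideanLin.symm f.toLinearMap)ᵀ * toEuclideanLin.symm f.toLinearMap = 1 := by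
  apply toEuclideanLin.injective
  rw [toLpLin_mul_same, ← conjTranspose_eq_transpose_of_trivial,
    toEuclideanLin_conjTranspose_eq_adjoint, LinearEquiv.apply_symm_apply,
    LinearIsometry.adjoint_comp_self', toLpLin_one]

theorem Matrix.sum_sq_sub_mulVec_sub_eq_norm_sq {m n : Type*} [Fintype m] [Fintype n]
    [DecidableEq n] (A : Matrix m n ℝ) (x : EuclideanSpace ℝ m)
    (z : EuclideanSpace ℝ n) (b : m → ℝ) :
    ∑ i, (x i - A.mulVec (fun l => z l) i - b i) ^ 2 =
      ‖x - toEuclideanLin A z - WithLp.toLp 2 b‖ ^ 2 := by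
  rw [EuclideanSpace.norm_sq_eq]
  simp [toLpLin_apply]

theorem local_procrustes_isometric_general (M : ℝ) :
    ∃ C : ℝ, ∀ (d q : ℕ), d ≤ q → ∀ (k : ℕ)
      (D : Set (EuclideanSpace ℝ (Fin d))), Convex ℝ D →
      ∀ (φ : EuclideanSpace ℝ (Fin d) → EuclideanSpace ℝ (Fin q)),
      ContDiff ℝ 2 φ →
      (∀ z ∈ D, ‖iteratedFDeriv ℝ 2 φ z‖ ≤ M) →
      ∀ z₀ : EuclideanSpace ℝ (Fin d), z₀ ∈ D →
      (∀ v, ‖fderiv ℝ φ z₀ v‖ = ‖v‖) →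
      ∀ z : Fin k → EuclideanSpace ℝ (Fin d), (∀ j, z j ∈ D) →
      ∀ r : ℝ, 0 ≤ r → (∀ j, ‖z j - z₀‖ ≤ r) →
      sInf {s : ℝ | ∃ (A : Matrix (Fin q) (Fin d) ℝ) (b : Fin q → ℝ),
          Aᵀ * A = 1 ∧
          s = ∑ j, ∑ i, (φ (z j) i - A.mulVec (fun l => z j l) i - b i) ^ 2} ≤
        C * k * r ^ 4 := by
  refine ⟨M ^ 2, fun d q _ k D hD φ hφ hφ₂ z₀ hz₀ hiso z hz r _ hzr => ?_⟩
  let J : EuclideanSpace ℝ (Fin d) →ₗᵢ[ℝ] EuclideanSpace ℝ (Fin q) :=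
    ⟨(fderiv ℝ φ z₀).toLinearMap, hiso⟩
  let A := toEuclideanLin.symm J.toLinearMap
  have hM : 0 ≤ M := (norm_nonneg _).trans (hφ₂ z₀ hz₀)
  refine csInf_le_of_le ⟨0, ?_⟩
    ⟨A, WithLp.ofLp (φ z₀ - J z₀), J.transpose_mul_self_toEuclideanLin_symm, rfl⟩ ?_
  · rintro _ ⟨A, b, -, rfl⟩
    positivity
  calc ∑ j, ∑ i, (φ (z j) i - A.mulVec (fun l => z j l) i - (φ z₀ - J z₀) i) ^ 2
      = ∑ j, ‖φ (z j) - φ z₀ - fderiv ℝ φ z₀ (z j - z₀)‖ ^ 2 := by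
        refine Finset.sum_congr rfl fun j _ => ?_
        rw [sum_sq_sub_mulVec_sub_eq_norm_sq, LinearEquiv.apply_symm_apply, WithLp.toLp_ofLp,
          map_sub]
        change ‖φ (z j) - J (z j) - (φ z₀ - J z₀)‖ ^ 2 = ‖_ - _ - (J (z j) - J z₀)‖ ^ 2
        abel_nf
    _ ≤ ∑ _j : Fin k, (M * r ^ 2) ^ 2 := by
        gcongr with j
        exact (hD.norm_sub_sub_fderiv_le_of_norm_iteratedFDeriv_two_le hφ hφ₂ hz₀ (hz j)).trans
          (by gcongr; exact hzr j)
    _ = M ^ 2 * k * r ^ 4 := by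
        rw [Finset.sum_const, Finset.card_univ, Fintype.card_fin, nsmul_eq_mul]
        ring

/-- Second-order convergence of the local Procrustes error under an
isometric C² embedding: there is a constant `C` depending only on the bound `M`
of the second derivative such that the local Procrustes infimum is at most
`C·k·r⁴`. -/
theorem local_procrustes_isometric (M : ℝ) (hM : 0 ≤ M) :
    ∃ C : ℝ, ∀ (d q : ℕ), d ≤ q → ∀ (k : ℕ)
      (D : Set (EuclideanSpace ℝ (Fin d))), Convex ℝ D →
      ∀ (φ : EuclideanSpace ℝ (Fin d) → EuclideanSpace ℝ (Fin q)),
      ContDiff ℝ 2 φ →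
      (∀ z ∈ D, ‖iteratedFDeriv ℝ 2 φ z‖ ≤ M) →
      ∀ z₀ : EuclideanSpace ℝ (Fin d), z₀ ∈ D →
      (∀ v, ‖fderiv ℝ φ z₀ v‖ = ‖v‖) →
      ∀ z : Fin k → EuclideanSpace ℝ (Fin d), (∀ j, z j ∈ D) →
      ∀ r : ℝ, 0 ≤ r → (∀ j, ‖z j - z₀‖ ≤ r) →
      sInf {s : ℝ | ∃ (A : Matrix (Fin q) (Fin d) ℝ) (b : Fin q → ℝ),
          Aᵀ * A = 1 ∧
          s = ∑ j, ∑ i, (φ (z j) i - A.mulVec (fun l => z j l) i - b i) ^ 2} ≤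
        C * k * r ^ 4 :=
  local_procrustes_isometric_general M
end

section
/- Conformal version of the local Procrustes bound: if φ is C² with Jacobian at z₀ satisfying J'J = c²I for some c > 0, then inf over column-orthogonal A, scalar s > 0, and b of ∑_j ‖φ(z_j) - sA z_j - b‖² ≤ C·k·r⁴, where r bounds ‖z_j - z₀‖ and C depends only on the second-derivative bound of φ. -/
/-!
Take `A = J / c`, `s = c` and `b = φ z₀ - J z₀`, where `J = Dφ(z₀)`; the conformality of `J`
makes `A` column-orthonormal. Each residual `φ(z_j) - c A z_j - b` is then the first-order
Taylor remainder of `φ` at `z₀`, which the mean value inequality on the segment `[z₀, z_j] ⊆ D`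
bounds by `M ‖z_j - z₀‖² ≤ M r²`; summing the squares over `j` gives `k M² r⁴`.
-/

open Matrix

section SecondOrder

variable {E F : Type*} [NormedAddCommGroup E] [NormedSpace ℝ E]
  [NormedAddCommGroup F] [NormedSpace ℝ F]
  {f : E → F} {D : Set E} {M : ℝ} {x y : E}

theorem norm_fderiv_sub_fderiv_le_of_norm_iteratedFDeriv_two_le (hf : ContDiff ℝ 2 f)
    (hD : Convex ℝ D) (hM : ∀ z ∈ D, ‖iteratedFDeriv ℝ 2 f z‖ ≤ M) (hx : x ∈ D) (hy : y ∈ D) :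
    ‖fderiv ℝ f y - fderiv ℝ f x‖ ≤ M * ‖y - x‖ := by
  have hdiff : Differentiable ℝ (fderiv ℝ f) :=
    (hf.fderiv_right (m := 1) le_rfl).differentiable one_ne_zero
  refine hD.norm_image_sub_le_of_norm_fderiv_le (fun z _ => hdiff z) (fun z hz => ?_) hx hy
  rw [← norm_iteratedFDeriv_zero (𝕜 := ℝ), norm_iteratedFDeriv_fderiv, norm_iteratedFDeriv_fderiv]
  exact hM z hz

theorem norm_sub_sub_fderiv_apply_le_of_norm_iteratedFDeriv_two_le (hf : ContDiff ℝ 2 f)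
    (hD : Convex ℝ D) (hM : ∀ z ∈ D, ‖iteratedFDeriv ℝ 2 f z‖ ≤ M) (hx : x ∈ D) (hy : y ∈ D) :
    ‖f y - f x - fderiv ℝ f x (y - x)‖ ≤ M * ‖y - x‖ ^ 2 := by
  have hM₀ : 0 ≤ M := (norm_nonneg _).trans (hM x hx)
  have hderiv : ∀ w ∈ segment ℝ x y, ‖fderiv ℝ f w - fderiv ℝ f x‖ ≤ M * ‖y - x‖ := by
    intro w hw
    have hxw : ‖w - x‖ ≤ ‖y - x‖ := by
      simpa only [dist_eq_norm, norm_sub_rev x] using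
        (dist_add_dist_of_mem_segment hw).le.trans' (le_add_of_nonneg_right dist_nonneg)
    calc ‖fderiv ℝ f w - fderiv ℝ f x‖ ≤ M * ‖w - x‖ :=
          norm_fderiv_sub_fderiv_le_of_norm_iteratedFDeriv_two_le hf hD hM hx
            (hD.segment_subset hx hy hw)
      _ ≤ M * ‖y - x‖ := by gcongr
  calc ‖f y - f x - fderiv ℝ f x (y - x)‖ ≤ M * ‖y - x‖ * ‖y - x‖ :=
        (convex_segment x y).norm_image_sub_le_of_norm_fderiv_le'
          (fun w _ => (hf.differentiable two_ne_zero).differentiableAt) hderiv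
          (left_mem_segment ℝ x y) (right_mem_segment ℝ x y)
    _ = M * ‖y - x‖ ^ 2 := by ring

end SecondOrder

namespace Matrix

variable {m n : Type*} [Fintype m] [Fintype n] [DecidableEq m] [DecidableEq n]

theorem transpose_mul_self_eq_one_of_norm_toEuclideanLin (A : Matrix m n ℝ)
    (hA : ∀ v, ‖toEuclideanLin A v‖ = ‖v‖) : Aᵀ * A = 1 := by
  let f : EuclideanSpace ℝ n →ₗᵢ[ℝ] EuclideanSpace ℝ m := ⟨toEuclideanLin A, hA⟩
  apply toEuclideanLin.injective
  rw [toLpLin_mul_same, ← conjTranspose_eq_transpose_of_trivial,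
    toEuclideanLin_conjTranspose_eq_adjoint, toLpLin_one]
  exact f.adjoint_comp_self'

theorem exists_transpose_mul_self_eq_one_of_norm_map_eq_mul_norm
    (f : EuclideanSpace ℝ n →ₗ[ℝ] EuclideanSpace ℝ m) {c : ℝ} (hc : 0 < c)
    (hf : ∀ v, ‖f v‖ = c * ‖v‖) :
    ∃ A : Matrix m n ℝ, Aᵀ * A = 1 ∧ ∀ v, c • (A *ᵥ WithLp.ofLp v) = WithLp.ofLp (f v) := by
  refine ⟨toEuclideanLin.symm (c⁻¹ • f), transpose_mul_self_eq_one_of_norm_toEuclideanLin _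
    fun v => ?_, fun v => ?_⟩
  · rw [LinearEquiv.apply_symm_apply, LinearMap.smul_apply, norm_smul, hf, norm_inv,
      Real.norm_of_nonneg hc.le, inv_mul_cancel_left₀ hc.ne']
  · change c • WithLp.ofLp (toEuclideanLin (toEuclideanLin.symm (c⁻¹ • f)) v) = _
    rw [LinearEquiv.apply_symm_apply, LinearMap.smul_apply,
      WithLp.ofLp_smul, smul_inv_smul₀ hc.ne']

end Matrix

theorem local_procrustes_conformal_general (M : ℝ) :
    ∃ C : ℝ, ∀ (d q : ℕ), d ≤ q → ∀ (k : ℕ)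
      (D : Set (EuclideanSpace ℝ (Fin d))), Convex ℝ D →
      ∀ (φ : EuclideanSpace ℝ (Fin d) → EuclideanSpace ℝ (Fin q)),
      ContDiff ℝ 2 φ →
      (∀ z ∈ D, ‖iteratedFDeriv ℝ 2 φ z‖ ≤ M) →
      ∀ z₀ : EuclideanSpace ℝ (Fin d), z₀ ∈ D →
      ∀ c : ℝ, 0 < c →
      (∀ v, ‖fderiv ℝ φ z₀ v‖ = c * ‖v‖) →
      ∀ z : Fin k → EuclideanSpace ℝ (Fin d), (∀ j, z j ∈ D) →
      ∀ r : ℝ, 0 ≤ r → (∀ j, ‖z j - z₀‖ ≤ r) →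
      sInf {s : ℝ | ∃ (A : Matrix (Fin q) (Fin d) ℝ) (t : ℝ) (b : Fin q → ℝ),
          Aᵀ * A = 1 ∧ 0 < t ∧
          s = ∑ j, ∑ i, (φ (z j) i - t * A.mulVec (fun l => z j l) i - b i) ^ 2} ≤
        C * k * r ^ 4 := by
  refine ⟨M ^ 2, fun d q _ k D hD φ hφ hM z₀ hz₀ c hc hJ z hz r _ hzr => ?_⟩
  set J := fderiv ℝ φ z₀
  obtain ⟨A, hA, hAJ⟩ := exists_transpose_mul_self_eq_one_of_norm_map_eq_mul_norm
    (J : EuclideanSpace ℝ (Fin d) →ₗ[ℝ] EuclideanSpace ℝ (Fin q)) hc hJ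
  set b := WithLp.ofLp (φ z₀ - J z₀)
  have hresidual : ∀ j, ∑ i, (φ (z j) i - c * A.mulVec (fun l => z j l) i - b i) ^ 2 =
      ‖φ (z j) - φ z₀ - J (z j - z₀)‖ ^ 2 := by
    intro j
    rw [EuclideanSpace.norm_sq_eq]
    refine Finset.sum_congr rfl fun i _ => ?_
    have hJi : c * A.mulVec (fun l => z j l) i = J (z j) i := congrFun (hAJ (z j)) i
    rw [hJi, Real.norm_eq_abs, sq_abs, map_sub]
    simp only [b, PiLp.sub_apply]
    ring
  have hTaylor : ∀ j, ‖φ (z j) - φ z₀ - J (z j - z₀)‖ ^ 2 ≤ (M * r ^ 2) ^ 2 := fun j => by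
    have hM₀ : 0 ≤ M := (norm_nonneg _).trans (hM z₀ hz₀)
    gcongr
    calc ‖φ (z j) - φ z₀ - J (z j - z₀)‖ ≤ M * ‖z j - z₀‖ ^ 2 :=
          norm_sub_sub_fderiv_apply_le_of_norm_iteratedFDeriv_two_le hφ hD hM hz₀ (hz j)
      _ ≤ M * r ^ 2 := by gcongr; exact hzr j
  calc _ ≤ ∑ j, ∑ i, (φ (z j) i - c * A.mulVec (fun l => z j l) i - b i) ^ 2 :=
        csInf_le ⟨0, by rintro _ ⟨_, _, _, _, _, rfl⟩; positivity⟩ (by exact ⟨A, c, b, hA, hc, rfl⟩)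
    _ ≤ ∑ _j : Fin k, (M * r ^ 2) ^ 2 :=
        Finset.sum_le_sum fun j _ => (hresidual j).trans_le (hTaylor j)
    _ = M ^ 2 * k * r ^ 4 := by
        rw [Finset.sum_const, Finset.card_univ, Fintype.card_fin, nsmul_eq_mul]
        ring

/-- Conformal version of the local Procrustes bound: if the
Jacobian at `z₀` satisfies `J'J = c²I` for some `c > 0`, the infimum over
column-orthogonal `A`, scale `s > 0` and translation `b` is at most `C·k·r⁴`,
where `C` depends only on the second-derivative bound `M`. -/
theorem local_procrustes_conformal (M : ℝ) (hM : 0 ≤ M) :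
    ∃ C : ℝ, ∀ (d q : ℕ), d ≤ q → ∀ (k : ℕ)
      (D : Set (EuclideanSpace ℝ (Fin d))), Convex ℝ D →
      ∀ (φ : EuclideanSpace ℝ (Fin d) → EuclideanSpace ℝ (Fin q)),
      ContDiff ℝ 2 φ →
      (∀ z ∈ D, ‖iteratedFDeriv ℝ 2 φ z‖ ≤ M) →
      ∀ z₀ : EuclideanSpace ℝ (Fin d), z₀ ∈ D →
      ∀ c : ℝ, 0 < c →
      (∀ v, ‖fderiv ℝ φ z₀ v‖ = c * ‖v‖) →
      ∀ z : Fin k → EuclideanSpace ℝ (Fin d), (∀ j, z j ∈ D) →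
      ∀ r : ℝ, 0 ≤ r → (∀ j, ‖z j - z₀‖ ≤ r) →
      sInf {s : ℝ | ∃ (A : Matrix (Fin q) (Fin d) ℝ) (t : ℝ) (b : Fin q → ℝ),
          Aᵀ * A = 1 ∧ 0 < t ∧
          s = ∑ j, ∑ i, (φ (z j) i - t * A.mulVec (fun l => z j l) i - b i) ^ 2} ≤
        C * k * r ^ 4 :=
  local_procrustes_conformal_general M
end

section
/- PCA projection dominates any other orthogonal projection in explained variance: if X is a k×q centered data matrix and P is the q×d matrix of its top d principal components, then for any q×d matrix J with orthonormal columns, ∑_{j=1}^k ‖P'x_j‖² ≥ ∑_{j=1}^k ‖J'x_j‖², and ∑_{j=1}^k ‖x_j‖² ≥ ∑_{j=1}^k ‖P'x_j‖². -/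
/-!
Write `Xᵀ X = Q D Qᵀ` with `D = diagonal μ`. For a matrix `J` with orthonormal columns the
explained variance is `tr (Jᵀ Xᵀ X J) = ∑ᵢ μᵢ wᵢ`, where `wᵢ = ((QᵀJ)(QᵀJ)ᵀ)ᵢᵢ` are the
diagonal entries of an orthogonal projection of rank `d`: they lie in `[0, 1]` and sum to `d`.
Maximising `∑ᵢ μᵢ wᵢ` under these constraints is a "bathtub" problem: since `μ` is decreasing,
the optimum puts weight one on the first `d` indices, which is exactly what `P` achieves.
The second inequality holds because `μ ≥ 0`, as `D = (XQ)ᵀ(XQ)` is a Gram matrix.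
-/

open Matrix Finset

namespace Finset

variable {ι : Type*} [Fintype ι] [DecidableEq ι]

theorem sum_mul_le_sum_of_threshold (S : Finset ι) {μ w : ι → ℝ} {t : ℝ}
    (hS : ∀ i ∈ S, t ≤ μ i) (hSc : ∀ i ∉ S, μ i ≤ t)
    (hw₀ : ∀ i, 0 ≤ w i) (hw₁ : ∀ i, w i ≤ 1) (hw : ∑ i, w i = #S) :
    ∑ i, μ i * w i ≤ ∑ i ∈ S, μ i := by
  -- Compare `μᵢ (wᵢ - 1_S(i))` with `t (wᵢ - 1_S(i))`; the latter sum to zero.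
  have hterm : ∀ i, μ i * w i - (if i ∈ S then μ i else 0)
      ≤ t * (w i - if i ∈ S then 1 else 0) := by
    intro i
    split_ifs with hi
    · nlinarith [hS i hi, hw₁ i]
    · nlinarith [hSc i hi, hw₀ i]
  have hzero : ∑ i, t * (w i - if i ∈ S then 1 else 0) = 0 := by
    rw [← mul_sum, sum_sub_distrib, hw, sum_boole]
    simp
  have hsum := sum_le_sum fun i (_ : i ∈ univ) => hterm i
  rw [hzero, sum_sub_distrib, sum_ite_mem, univ_inter] at hsum
  linarith

end Finset

theorem Fin.sum_mul_le_sum_castLE_of_antitone {q d : ℕ} (hd : d ≤ q) {μ w : Fin q → ℝ}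
    (hμ : Antitone μ) (hw₀ : ∀ i, 0 ≤ w i) (hw₁ : ∀ i, w i ≤ 1) (hw : ∑ i, w i = d) :
    ∑ i, μ i * w i ≤ ∑ a : Fin d, μ (Fin.castLE hd a) := by
  have hmem : ∀ i : Fin q, i ∈ univ.map (Fin.castLEEmb hd) ↔ (i : ℕ) < d := by
    intro i
    simp only [mem_map, mem_univ, true_and, Fin.castLEEmb_apply]
    exact Set.ext_iff.mp (Fin.range_castLE hd) i
  -- For `d = q` the complement is empty and any lower bound of `μ` is a threshold.
  refine (sum_mul_le_sum_of_threshold _ (t := if h : d < q then μ ⟨d, h⟩ else ⨅ i, μ i)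
    (fun i hi => ?_) (fun i hi => ?_) hw₀ hw₁ (by simpa using hw)).trans_eq
    (sum_map univ (Fin.castLEEmb hd) μ)
  · rw [hmem] at hi
    split_ifs with h
    · exact hμ (Fin.le_def.mpr hi.le)
    · exact ciInf_le (Finite.bddBelow_range μ) i
  · rw [hmem, not_lt] at hi
    rw [dif_pos (hi.trans_lt i.isLt)]
    exact hμ (Fin.le_def.mpr hi)

namespace Matrix

variable {l m n o : Type*}

theorem trace_transpose_mul_diagonal_mul [Fintype m] [Fintype n] [DecidableEq m]
    {R : Type*} [CommSemiring R] (B : Matrix m n R) (μ : m → R) :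
    (Bᵀ * diagonal μ * B).trace = ∑ i, μ i * (B * Bᵀ) i i := by
  rw [Matrix.mul_assoc, trace_mul_comm, Matrix.mul_assoc]
  simp only [trace, diag, diagonal_mul]

theorem diag_mul_transpose_self_nonneg [Fintype n] (B : Matrix m n ℝ) (i : m) :
    0 ≤ (B * Bᵀ) i i := by
  simp only [mul_apply, transpose_apply]
  exact sum_nonneg fun j _ => mul_self_nonneg _

/-- `B Bᵀ` is a symmetric idempotent, so `(B Bᵀ)ᵢᵢ = ∑ⱼ (B Bᵀ)ᵢⱼ² ≥ (B Bᵀ)ᵢᵢ²`. -/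
theorem diag_mul_transpose_self_le_one [Fintype m] [Fintype n] [DecidableEq n]
    {B : Matrix m n ℝ} (hB : Bᵀ * B = 1) (i : m) : (B * Bᵀ) i i ≤ 1 := by
  set M := B * Bᵀ
  have hidem : M * M = M := by
    rw [Matrix.mul_assoc, ← Matrix.mul_assoc Bᵀ, hB, Matrix.one_mul]
  have hsymm : Mᵀ = M := by rw [transpose_mul, transpose_transpose]
  have hsq : M i i = ∑ j, M i j ^ 2 := by
    conv_lhs => rw [← hidem, mul_apply]
    refine sum_congr rfl fun j _ => ?_
    rw [sq, ← transpose_apply M j i, hsymm]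
  have hle : M i i ^ 2 ≤ M i i :=
    hsq ▸ single_le_sum (fun j _ => sq_nonneg (M i j)) (mem_univ i)
  nlinarith [diag_mul_transpose_self_nonneg B i]

theorem sum_diag_mul_transpose_self [Fintype m] [Fintype n] [DecidableEq n]
    {B : Matrix m n ℝ} (hB : Bᵀ * B = 1) :
    ∑ i, (B * Bᵀ) i i = Fintype.card n := by
  change (B * Bᵀ).trace = _
  rw [trace_mul_comm, hB, trace_one]

theorem transpose_mul_self_mul_of_eq {R : Type*} [Fintype l] [Fintype m] [CommSemiring R]
    {X : Matrix l m R} {Q D : Matrix m m R} (h : Xᵀ * X = Q * D * Qᵀ) (S : Matrix m n R) :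
    (X * S)ᵀ * (X * S) = (Qᵀ * S)ᵀ * D * (Qᵀ * S) := by
  rw [transpose_mul, Matrix.mul_assoc, ← Matrix.mul_assoc Xᵀ, h]
  simp only [transpose_mul, transpose_transpose, Matrix.mul_assoc]

theorem transpose_submatrix_mul_submatrix {α : Type*} [Fintype l] [CommSemiring α]
    (A : Matrix l n α) (f : o → n) :
    (A.submatrix id f)ᵀ * A.submatrix id f = (Aᵀ * A).submatrix f f := by
  rw [submatrix_mul _ _ f id f Function.bijective_id, transpose_submatrix]

end Matrix

theorem pca_dominates_general {k q d : ℕ} (hd : d ≤ q)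
    (X : Matrix (Fin k) (Fin q) ℝ)
    (Q : Matrix (Fin q) (Fin q) ℝ) (μ : Fin q → ℝ)
    (hQ : Qᵀ * Q = 1) (hQ' : Q * Qᵀ = 1)
    (hdiag : Xᵀ * X = Q * Matrix.diagonal μ * Qᵀ)
    (hmono : ∀ i j : Fin q, i ≤ j → μ j ≤ μ i)
    (P : Matrix (Fin q) (Fin d) ℝ) (hP : P = Q.submatrix id (Fin.castLE hd))
    (J : Matrix (Fin q) (Fin d) ℝ) (hJ : Jᵀ * J = 1) :
    ((X * J)ᵀ * (X * J)).trace ≤ ((X * P)ᵀ * (X * P)).trace ∧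
    ((X * P)ᵀ * (X * P)).trace ≤ (Xᵀ * X).trace := by
  have hgramQ : (X * Q)ᵀ * (X * Q) = diagonal μ := by
    rw [transpose_mul_self_mul_of_eq hdiag, hQ, transpose_one, Matrix.one_mul, Matrix.mul_one]
  have hμ : ∀ i, 0 ≤ μ i := fun i => by
    have := diag_mul_transpose_self_nonneg (X * Q)ᵀ i
    rwa [transpose_transpose, hgramQ, diagonal_apply_eq] at this
  have hB : (Qᵀ * J)ᵀ * (Qᵀ * J) = 1 := by
    rw [transpose_mul, transpose_transpose, Matrix.mul_assoc, ← Matrix.mul_assoc Q, hQ',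
      Matrix.one_mul, hJ]
  have traceJ : ((X * J)ᵀ * (X * J)).trace = ∑ i, μ i * ((Qᵀ * J) * (Qᵀ * J)ᵀ) i i := by
    rw [transpose_mul_self_mul_of_eq hdiag, trace_transpose_mul_diagonal_mul]
  have traceP : ((X * P)ᵀ * (X * P)).trace = ∑ a, μ (Fin.castLE hd a) := by
    rw [hP, ← submatrix_id_id X, ← submatrix_mul _ _ id id _ Function.bijective_id,
      transpose_submatrix_mul_submatrix, hgramQ,
      submatrix_diagonal _ _ (Fin.castLE_injective hd), trace_diagonal, Function.comp_def]
  have traceX : (Xᵀ * X).trace = ∑ i, μ i := by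
    rw [hdiag, trace_mul_comm, ← Matrix.mul_assoc, hQ, Matrix.one_mul, trace_diagonal]
  rw [traceJ, traceP, traceX]
  refine ⟨Fin.sum_mul_le_sum_castLE_of_antitone hd hmono
      (fun i => diag_mul_transpose_self_nonneg _ i)
      (fun i => diag_mul_transpose_self_le_one hB i)
      (by simpa using sum_diag_mul_transpose_self hB), ?_⟩
  exact (sum_map univ (Fin.castLEEmb hd) μ).symm.trans_le (sum_le_univ_sum_of_nonneg hμ)

/-- PCA projection dominates any other orthogonal projection in
explained variance: `∑ⱼ ‖J'xⱼ‖² ≤ ∑ⱼ ‖P'xⱼ‖² ≤ ∑ⱼ ‖xⱼ‖²` where `P` holds the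
top-`d` eigenvectors of `X'X` and `J` has orthonormal columns. -/
theorem pca_dominates {k q d : ℕ} (hd : d ≤ q)
    (X : Matrix (Fin k) (Fin q) ℝ) (hcent : ∀ j, ∑ i, X i j = 0)
    (Q : Matrix (Fin q) (Fin q) ℝ) (μ : Fin q → ℝ)
    (hQ : Qᵀ * Q = 1) (hQ' : Q * Qᵀ = 1)
    (hdiag : Xᵀ * X = Q * Matrix.diagonal μ * Qᵀ)
    (hmono : ∀ i j : Fin q, i ≤ j → μ j ≤ μ i)
    (P : Matrix (Fin q) (Fin d) ℝ) (hP : P = Q.submatrix id (Fin.castLE hd))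
    (J : Matrix (Fin q) (Fin d) ℝ) (hJ : Jᵀ * J = 1) :
    ((X * J)ᵀ * (X * J)).trace ≤ ((X * P)ᵀ * (X * P)).trace ∧
    ((X * P)ᵀ * (X * P)).trace ≤ (Xᵀ * X).trace :=
  pca_dominates_general hd X Q μ hQ hQ' hdiag hmono P hP J hJ
end
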